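/- Let X and Y be finite simple graphs such that there is a quantum homomorphism from X to Y but no graph homomorphism from X to Y. Then the independence number of X ⋉ Y is strictly less than the quantum independence number of X ⋉ Y; in fact α(X ⋉ Y) < |V(X)| = α_q(X ⋉ Y). -/

import Mathlib

open Matrix Finset

/-- A quantum homomorphism from `X` to `Y`: for some `d ≥ 1` there are complex `d × d`
projectors `E x y` (Hermitian idempotents) with `∑ y, E x y = 1` for every `x`,
`E x y * E x y' = 0` whenever `y ≠ y'`, and `E x y * E x' y' = 0` whenever `x, x'`
are adjacent in `X` and `y, y'` are equal or nonadjacent in `Y`. -/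
def IsQuantumHom {V W : Type} [Fintype V] [Fintype W]
    (X : SimpleGraph V) (Y : SimpleGraph W) : Prop :=
  ∃ d : ℕ, 0 < d ∧ ∃ E : V → W → Matrix (Fin d) (Fin d) ℂ,
    (∀ x y, (E x y).IsHermitian ∧ E x y * E x y = E x y) ∧
    (∀ x, ∑ y, E x y = 1) ∧
    (∀ x y y', y ≠ y' → E x y * E x y' = 0) ∧
    (∀ x x' y y', X.Adj x x' → ¬ Y.Adj y y' → E x y * E x' y' = 0)

/-- The homomorphic product `X ⋉ Y`: distinct vertices `(x,y)` and `(x',y')` are adjacent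
iff `x = x'`, or (`x ~ x'` in `X` and `y, y'` are equal or nonadjacent in `Y`). -/
def homProd {V W : Type} (X : SimpleGraph V) (Y : SimpleGraph W) :
    SimpleGraph (V × W) where
  Adj a b := a ≠ b ∧ (a.1 = b.1 ∨ (X.Adj a.1 b.1 ∧ ¬ Y.Adj a.2 b.2))
  symm := ⟨by
    rintro a b ⟨hne, h⟩
    refine ⟨hne.symm, ?_⟩
    rcases h with h | ⟨h1, h2⟩
    · exact Or.inl h.symm
    · exact Or.inr ⟨h1.symm, fun hb => h2 hb.symm⟩⟩
  loopless := ⟨fun a ha => ha.1 rfl⟩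

/-- The independence number: the largest size of a set of pairwise nonadjacent vertices. -/
noncomputable def indepNum {U : Type} [Fintype U] (Z : SimpleGraph U) : ℕ :=
  sSup {n | ∃ s : Finset U, s.card = n ∧ ∀ a ∈ s, ∀ b ∈ s, a ≠ b → ¬ Z.Adj a b}

/-!
An independent set of `X ⋉ Y` meets each fibre `{x} × V(Y)` at most once, and one meeting every
fibre is the graph of a homomorphism `X → Y`; hence `α(X ⋉ Y) < |V(X)|`. For the lower bound on
`α_q`, the projectors `F x (x', y) := [x' = x] E x y` built from `X →q Y` form
`K_{V(X)} →q (X ⋉ Y)ᶜ`. For the upper bound, the first projection is a homomorphism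
`(X ⋉ Y)ᶜ → K_{V(X)}`, so `K_m →q (X ⋉ Y)ᶜ` gives `K_m →q K_{V(X)}`; and `K_m →q K_n` in
dimension `d` forces `m ≤ n`, since for each `j` the projectors `E i j` are pairwise orthogonal,
so `∑ i, tr (E i j) ≤ d`, while summing over `j` first gives `∑ i, tr 1 = m d`.
-/

theorem Matrix.isStarProjection_iff {n α : Type*} [Fintype n] [NonUnitalNonAssocSemiring α]
    [Star α] {A : Matrix n n α} : IsStarProjection A ↔ A.IsHermitian ∧ A * A = A :=
  ⟨fun h => ⟨h.isSelfAdjoint, h.isIdempotentElem⟩, fun h => ⟨h.2, h.1⟩⟩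

theorem IsStarProjection.sum {R ι : Type*} [NonUnitalSemiring R] [StarRing R] {s : Finset ι}
    {p : ι → R} (hp : ∀ i ∈ s, IsStarProjection (p i))
    (horth : ∀ i ∈ s, ∀ j ∈ s, i ≠ j → p i * p j = 0) : IsStarProjection (∑ i ∈ s, p i) := by
  classical
  induction s using Finset.induction_on with
  | empty => simp [IsStarProjection.zero]
  | insert a s ha ih =>
    rw [sum_insert ha]
    refine (hp a (mem_insert_self a s)).add
      (ih (fun i hi => hp i (mem_insert_of_mem hi))
        fun i hi j hj => horth i (mem_insert_of_mem hi) j (mem_insert_of_mem hj)) ?_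
    rw [mul_sum]
    exact sum_eq_zero fun i hi =>
      horth a (mem_insert_self a s) i (mem_insert_of_mem hi) (ne_of_mem_of_not_mem hi ha).symm

section Trace

variable {n R : Type*} [Fintype n] [CommRing R] [PartialOrder R] [StarRing R]
  [StarOrderedRing R] {A : Matrix n n R}

theorem IsStarProjection.trace_nonneg (hA : IsStarProjection A) : 0 ≤ A.trace := by
  have hA_eq : A = Aᴴ * A := by rw [show Aᴴ = A from hA.isSelfAdjoint, hA.isIdempotentElem.eq]
  rw [hA_eq]
  exact (posSemidef_conjTranspose_mul_self A).trace_nonneg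

theorem IsStarProjection.trace_le_card [DecidableEq n] (hA : IsStarProjection A) :
    A.trace ≤ Fintype.card n := by
  have := hA.one_sub.trace_nonneg
  rwa [trace_sub, trace_one, sub_nonneg] at this

end Trace

section QuantumHom

variable {U V W V' : Type} [Fintype U] [Fintype V] [Fintype W] [Fintype V']

theorem IsQuantumHom.comp_hom {Z : SimpleGraph U} {X : SimpleGraph V} {Y : SimpleGraph W}
    (h : IsQuantumHom X Y) (f : Z →g X) : IsQuantumHom Z Y := by
  obtain ⟨d, hd, E, hproj, hsum, horth, hadj⟩ := h
  exact ⟨d, hd, fun u => E (f u), fun u => hproj (f u), fun u => hsum (f u),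
    fun u => horth (f u), fun u u' y y' huu' => hadj _ _ y y' (f.map_adj huu')⟩

theorem IsQuantumHom.hom_comp {X : SimpleGraph V} {Y : SimpleGraph W} {Y' : SimpleGraph V'}
    (h : IsQuantumHom X Y) (g : Y →g Y') : IsQuantumHom X Y' := by
  classical
  obtain ⟨d, hd, E, hproj, hsum, horth, hadj⟩ := h
  refine ⟨d, hd, fun x w => ∑ y with g y = w, E x y, fun x w => ?_, fun x => ?_,
    fun x w w' hww' => ?_, fun x x' w w' hxx' hww' => ?_⟩
  · exact isStarProjection_iff.mp <| IsStarProjection.sum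
      (fun y _ => isStarProjection_iff.mpr (hproj x y)) fun y _ y' _ => horth x y y'
  · change ∑ w, ∑ y with g y = w, E x y = 1
    rw [Finset.sum_fiberwise univ (⇑g) (E x), hsum]
  · rw [sum_mul_sum]
    refine sum_eq_zero fun y hy => sum_eq_zero fun y' hy' => horth x y y' fun hyy' => hww' ?_
    rw [(mem_filter.mp hy).2.symm, (mem_filter.mp hy').2.symm, hyy']
  · rw [sum_mul_sum]
    refine sum_eq_zero fun y hy => sum_eq_zero fun y' hy' => hadj x x' y y' hxx' fun hyy' => hww' ?_
    rw [(mem_filter.mp hy).2.symm, (mem_filter.mp hy').2.symm]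
    exact g.map_adj hyy'

open scoped ComplexOrder in
theorem IsQuantumHom.card_le_of_top (h : IsQuantumHom (⊤ : SimpleGraph U) (⊤ : SimpleGraph V)) :
    Fintype.card U ≤ Fintype.card V := by
  obtain ⟨d, hd, E, hproj, hsum, -, hadj⟩ := h
  have hcolumn : ∀ x, IsStarProjection (∑ u, E u x) := fun x =>
    IsStarProjection.sum (fun u _ => isStarProjection_iff.mpr (hproj u x))
      fun u _ u' _ huu' => hadj u u' x x huu' fun hxx => hxx.ne rfl
  have hle : ((Fintype.card U * d : ℕ) : ℂ) ≤ ((Fintype.card V * d : ℕ) : ℂ) :=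
    calc ((Fintype.card U * d : ℕ) : ℂ) = ∑ u, (∑ x, E u x).trace := by simp [hsum]
      _ = ∑ x, (∑ u, E u x).trace := by simp only [trace_sum]; exact sum_comm
      _ ≤ ∑ _x : V, ((Fintype.card (Fin d) : ℕ) : ℂ) :=
        sum_le_sum fun x _ => (hcolumn x).trace_le_card
      _ = ((Fintype.card V * d : ℕ) : ℂ) := by simp
  exact Nat.le_of_mul_le_mul_right (Nat.cast_le.mp hle) hd

end QuantumHom

section HomProd

variable {V W : Type} {X : SimpleGraph V} {Y : SimpleGraph W}

theorem injOn_fst_of_isIndepSet_homProd {s : Set (V × W)} (hs : (homProd X Y).IsIndepSet s) :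
    Set.InjOn Prod.fst s :=
  fun _ ha _ hb hab => by_contra fun hne => hs ha hb hne ⟨hne, Or.inl hab⟩

theorem nonempty_hom_of_isIndepSet_homProd {s : Set (V × W)} (hs : (homProd X Y).IsIndepSet s)
    (hcover : ∀ x, ∃ y, (x, y) ∈ s) : Nonempty (X →g Y) := by
  choose f hf using hcover
  refine ⟨⟨f, fun {x x'} hxx' => ?_⟩⟩
  by_contra hyy'
  have hne : (x, f x) ≠ (x', f x') := fun h => hxx'.ne (congrArg Prod.fst h)
  exact hs (hf x) (hf x') hne ⟨hne, Or.inr ⟨hxx', hyy'⟩⟩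

theorem card_lt_of_isIndepSet_homProd [Fintype V] (hc : IsEmpty (X →g Y)) {s : Finset (V × W)}
    (hs : (homProd X Y).IsIndepSet s) : #s < Fintype.card V := by
  classical
  have hinj := injOn_fst_of_isIndepSet_homProd hs
  rw [← card_image_of_injOn hinj]
  refine (card_le_univ _).lt_of_ne fun hcard => ?_
  have hcover : ∀ x, ∃ y, (x, y) ∈ (s : Set (V × W)) := fun x => by
    obtain ⟨a, ha, rfl⟩ := mem_image.mp (eq_univ_of_card _ hcard ▸ mem_univ x)
    exact ⟨a.2, ha⟩
  obtain ⟨f⟩ := nonempty_hom_of_isIndepSet_homProd hs hcover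
  exact hc.false f

theorem indepNum_eq_simpleGraph_indepNum {U : Type} [Fintype U] (Z : SimpleGraph U) :
    indepNum Z = Z.indepNum := by
  simp only [indepNum, SimpleGraph.indepNum, SimpleGraph.isNIndepSet_iff, SimpleGraph.IsIndepSet,
    Set.Pairwise, and_comm]
  rfl

theorem indepNum_homProd_lt_card [Fintype V] [Fintype W] (hc : IsEmpty (X →g Y)) :
    indepNum (homProd X Y) < Fintype.card V := by
  obtain ⟨s, hs⟩ := (homProd X Y).exists_isNIndepSet_indepNum
  rw [indepNum_eq_simpleGraph_indepNum, ← hs.card_eq]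
  exact card_lt_of_isIndepSet_homProd hc hs.isIndepSet

variable (X Y) in
def homProdComplFst : (homProd X Y)ᶜ →g (⊤ : SimpleGraph V) where
  toFun := Prod.fst
  map_rel' hab := fun hfst => hab.2 ⟨hab.1, Or.inl hfst⟩

theorem isQuantumHom_top_homProd_compl [Fintype V] [Fintype W] (h : IsQuantumHom X Y) :
    IsQuantumHom (⊤ : SimpleGraph V) (homProd X Y)ᶜ := by
  classical
  obtain ⟨d, hd, E, hproj, hsum, horth, hadj⟩ := h
  refine ⟨d, hd, fun x z => if z.1 = x then E x z.2 else 0, fun x z => ?_, fun x => ?_,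
    fun x z z' hzz' => ?_, fun x x' z z' hxx' hzz' => ?_⟩ <;> dsimp only
  · split_ifs
    · exact hproj x z.2
    · exact isStarProjection_iff.mp (IsStarProjection.zero _)
  · simp [Fintype.sum_prod_type, hsum]
  · split_ifs with hz hz'
    · exact horth x z.2 z'.2 fun h => hzz' (Prod.ext (hz.trans hz'.symm) h)
    all_goals simp only [zero_mul, mul_zero]
  · split_ifs with hz hz'
    · subst hz hz'
      have hfst : z.1 ≠ z'.1 := hxx'.ne
      have hprod : (homProd X Y).Adj z z' :=
        not_not.mp fun h => hzz' ⟨fun hzz => hfst (congrArg Prod.fst hzz), h⟩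
      obtain ⟨hX, hY⟩ := hprod.2.resolve_left hfst
      exact hadj _ _ _ _ hX hY
    all_goals simp only [zero_mul, mul_zero]

end HomProd

/-- If `X →q Y` but there is no graph homomorphism `X → Y`, then
`α(X ⋉ Y) < |V(X)| = α_q(X ⋉ Y)`. -/
theorem indep_lt_qIndep_of_quantumHom {V W : Type} [Fintype V] [Fintype W]
    (X : SimpleGraph V) (Y : SimpleGraph W)
    (hq : IsQuantumHom X Y) (hc : IsEmpty (X →g Y)) :
    indepNum (homProd X Y) < Fintype.card V ∧
    IsQuantumHom (⊤ : SimpleGraph (Fin (Fintype.card V))) (homProd X Y)ᶜ ∧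
    (∀ m : ℕ, Fintype.card V < m →
      ¬ IsQuantumHom (⊤ : SimpleGraph (Fin m)) (homProd X Y)ᶜ) := by
  refine ⟨indepNum_homProd_lt_card hc, ?_, fun m hm hqm => ?_⟩
  · exact (isQuantumHom_top_homProd_compl hq).comp_hom
      (SimpleGraph.Embedding.completeGraph (Fintype.equivFin V).symm.toEmbedding).toHom
  · have hle := (hqm.hom_comp (homProdComplFst X Y)).card_le_of_top
    rw [Fintype.card_fin] at hle
    exact hm.not_ge hle
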